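/- Let (z_i, θ_i), i ∈ I, be a finite family in ℝⁿ × (0, ∞) such that for all i ≠ j: θ_i < ‖z_i - z_j‖ and θ_i + θ_j > ‖z_i - z_j‖ (i.e., z_i ∉ B(z_j, θ_j) and B(z_i,θ_i) ∩ B(z_j,θ_j) ≠ ∅ for all pairs). Then |I| < u·vⁿ for some absolute constants u, v > 0 independent of n and the family. -/

import Mathlib

/-! The balls `B(z i, θ i)` pairwise intersect and no ball contains another's center. Listing them
so that the smallest ball comes last turns any `N + 1` of them into a Besicovitch satellite
configuration with `τ = 1`, hence with any `τ ≥ 1`. Mathlib's proof of the Besicovitch covering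
theorem shows that no such configuration exists for `N = multiplicity E ≤ 5 ^ dim E`. -/

namespace Besicovitch

def SatelliteConfig.ofPairwise {α : Type*} [MetricSpace α] {N : ℕ} {τ : ℝ} (hτ : 1 ≤ τ)
    (c : Fin N.succ → α) (r : Fin N.succ → ℝ) (rpos : ∀ i, 0 < r i)
    (hsep : Pairwise fun i j => r i ≤ dist (c i) (c j))
    (hinter : Pairwise fun i j => dist (c i) (c j) ≤ r i + r j)
    (hmin : ∀ i, r (Fin.last N) ≤ r i) : SatelliteConfig α N τ where
  c := c
  r := r
  rpos := rpos
  h i j hij := by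
    have le_τ_mul : ∀ k, r k ≤ τ * r k := fun k => le_mul_of_one_le_left (rpos k).le hτ
    rcases le_total (r j) (r i) with hji | hij'
    · exact Or.inl ⟨hsep hij, hji.trans (le_τ_mul i)⟩
    · exact Or.inr ⟨hsep hij.symm, hij'.trans (le_τ_mul j)⟩
  hlast i hi :=
    ⟨hsep hi.ne, (hmin i).trans (le_mul_of_one_le_left (rpos i).le hτ)⟩
  inter i hi := hinter hi.ne

theorem card_le_multiplicity_of_pairwise {E : Type*} [NormedAddCommGroup E] [NormedSpace ℝ E]
    [FiniteDimensional ℝ E] {ι : Type*} [Fintype ι] (c : ι → E) (r : ι → ℝ)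
    (rpos : ∀ i, 0 < r i) (hsep : Pairwise fun i j => r i ≤ dist (c i) (c j))
    (hinter : Pairwise fun i j => dist (c i) (c j) ≤ r i + r j) :
    Fintype.card ι ≤ multiplicity E := by
  classical
  by_contra! hcard
  obtain ⟨f⟩ : Nonempty (Fin (multiplicity E).succ ↪ ι) :=
    Function.Embedding.nonempty_of_card_le (by simpa)
  have : Nonempty ι := ⟨f 0⟩
  obtain ⟨i₀, hi₀⟩ := Finite.exists_min r
  let e : Fin (multiplicity E).succ ↪ ι := f.trans (Equiv.swap (f (Fin.last _)) i₀).toEmbedding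
  have he : e (Fin.last _) = i₀ := Equiv.swap_apply_left _ _
  exact (isEmpty_satelliteConfig_multiplicity E).false <|
    .ofPairwise (one_lt_goodτ E).le (c ∘ e) (r ∘ e) (fun i => rpos _)
      (hsep.comp_of_injective e.injective) (hinter.comp_of_injective e.injective)
      (fun i => by simpa only [Function.comp_apply, he] using hi₀ (e i))

end Besicovitch

theorem stmt_14 :
    ∃ u v : ℝ, 0 < u ∧ 0 < v ∧
      ∀ (n : ℕ) (I : Type) (_ : Fintype I)
        (z : I → EuclideanSpace ℝ (Fin n)) (θ : I → ℝ),
        (∀ i, 0 < θ i) →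
        (∀ i j, i ≠ j → θ i < ‖z i - z j‖ ∧ ‖z i - z j‖ < θ i + θ j) →
        (Fintype.card I : ℝ) < u * v ^ n := by
  refine ⟨2, 5, by norm_num, by norm_num, fun n I _ z θ hθ hpair => ?_⟩
  have hcard : Fintype.card I ≤ 5 ^ n := by
    calc Fintype.card I ≤ Besicovitch.multiplicity (EuclideanSpace ℝ (Fin n)) :=
          Besicovitch.card_le_multiplicity_of_pairwise z θ hθ
            (fun i j hij => by simpa [dist_eq_norm] using (hpair i j hij).1.le)
            (fun i j hij => by simpa [dist_eq_norm] using (hpair i j hij).2.le)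
      _ ≤ 5 ^ n := by
          simpa using Besicovitch.multiplicity_le (E := EuclideanSpace ℝ (Fin n))
  calc (Fintype.card I : ℝ) ≤ 5 ^ n := by exact_mod_cast hcard
    _ < 2 * 5 ^ n := by linarith [pow_pos (show (0 : ℝ) < 5 by norm_num) n]
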